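/- Let D be a finite T-period dataset. D is naively Nash rationalizable if and only if it satisfies T-SARP: there is no cyclic sequence k₁,…,k_L with x^{k_l} ≠ x^{k_{l+1}} and x^{k_l} ∈ B^{k_{l+1}}(x^{k_{l+1}}_{−T}), where B(x_{−T}) is the section of B fixing all coordinates except the T-th at x_{−T}. -/

import Mathlib

/-!
Earlier-period preferences can be taken totally indifferent, leaving a revealed-preference problem
whose budgets are the last-period sections `B^k(x^k_{-T})`. If `x^k` is the unique best choice,
every `y ≠ x^k` in that section is strictly worse than `x^k`, so a T-SARP cycle would be a cycle of
strict preferences. Conversely, when the strict revealed-preference relation is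
acyclic, its reflexive-transitive closure is a partial order, and any linear extension of it
(Szpilrajn) rationalizes the data with unique maxima.
-/

def maxSet {X : Type} (S : Set X) (pref : X → X → Prop) : Set X :=
  {x | x ∈ S ∧ ∀ y ∈ S, pref x y}

def WeakOrder {X : Type} (pref : X → X → Prop) : Prop :=
  (∀ a b, pref a b ∨ pref b a) ∧ Transitive pref

/-- The section of a budget `B` fixing the first `n` coordinates at those of `x`. -/
def secUpTo {T : ℕ} {X : Fin T → Type} (B : Set (∀ t, X t)) (x : ∀ t, X t)
    (n : ℕ) : Set (∀ t, X t) :=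
  {y ∈ B | ∀ s : Fin T, (s : ℕ) < n → y s = x s}

/-- The section of `B` fixing all coordinates except the `t`-th at those of `x`. -/
def secExcept {T : ℕ} {X : Fin T → Type} (B : Set (∀ t, X t)) (x : ∀ t, X t)
    (t : Fin T) : Set (∀ t, X t) :=
  {y ∈ B | ∀ s : Fin T, s ≠ t → y s = x s}

/-- T-SARP: no cycle with `x^{k_l} ≠ x^{k_{l+1}}` and
`x^{k_l} ∈ B^{k_{l+1}}(x^{k_{l+1}}_{−T})`. -/
def TSARP {K : Type} {T : ℕ} (hT : 0 < T) {X : Fin T → Type}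
    (x : K → ∀ t, X t) (B : K → Set (∀ t, X t)) : Prop :=
  ¬ ∃ (L : ℕ) (k : Fin (L + 1) → K), ∀ l : Fin (L + 1),
      x (k l) ≠ x (k (l + 1)) ∧
      x (k l) ∈ secExcept (B (k (l + 1))) (x (k (l + 1))) ⟨T - 1, by omega⟩

/-- T-period naive Nash rationalizability. -/
def NaiveNashRatT {K : Type} {T : ℕ} (hT : 0 < T) {X : Fin T → Type}
    (x : K → ∀ t, X t) (B : K → Set (∀ t, X t)) : Prop :=
  ∃ pref : Fin T → ((∀ t, X t) → (∀ t, X t) → Prop),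
    (∀ t, WeakOrder (pref t)) ∧
    ∀ k, (∀ t : Fin T, (t : ℕ) + 1 < T →
        x k ∈ maxSet (secExcept (B k) (x k) t) (pref t)) ∧
      maxSet (secUpTo (B k) (x k) (T - 1)) (pref ⟨T - 1, by omega⟩) = {x k}

namespace Relation

variable {α : Type*} {r : α → α → Prop}

open Fin.NatCast in
theorem transGen_of_fin_cycle {L : ℕ} {f : Fin (L + 1) → α}
    (hf : ∀ l, r (f l) (f (l + 1))) : TransGen r (f 0) (f 0) := by
  have hstep : ∀ n : ℕ, TransGen r (f n) (f (n + 1 : ℕ)) := fun n => by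
    rw [Nat.cast_succ]
    exact .single (hf n)
  have := Nat.rel_of_forall_rel_succ_of_lt (TransGen r) hstep L.succ_pos
  rwa [Nat.cast_zero, Fin.natCast_self] at this

theorem TransGen.exists_fin_path {a b : α} (h : TransGen r a b) :
    ∃ (L : ℕ) (f : Fin (L + 1) → α), f 0 = a ∧
      (∀ l : Fin L, r (f l.castSucc) (f l.succ)) ∧ r (f (Fin.last L)) b := by
  induction h with
  | single hab => exact ⟨0, fun _ => a, rfl, Fin.elim0, hab⟩
  | @tail b c _ hbc ih =>
    obtain ⟨L, f, hf0, hpath, hlast⟩ := ih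
    refine ⟨L + 1, Fin.snoc f b, by simpa using hf0, fun l => ?_, by simpa using hbc⟩
    induction l using Fin.lastCases with
    | last => simpa using hlast
    | cast j =>
      rw [Fin.succ_castSucc, Fin.snoc_castSucc, Fin.snoc_castSucc]
      exact hpath j

theorem exists_fin_cycle_iff_exists_transGen :
    (∃ (L : ℕ) (f : Fin (L + 1) → α), ∀ l, r (f l) (f (l + 1))) ↔ ∃ a, TransGen r a a := by
  refine ⟨fun ⟨L, f, hf⟩ => ⟨f 0, transGen_of_fin_cycle hf⟩, fun ⟨a, ha⟩ => ?_⟩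
  obtain ⟨L, f, hf0, hpath, hlast⟩ := ha.exists_fin_path
  refine ⟨L, f, fun l => ?_⟩
  induction l using Fin.lastCases with
  | last => rwa [Fin.last_add_one, hf0]
  | cast j => rw [Fin.coeSucc_eq_succ]; exact hpath j

theorem isPartialOrder_reflTransGen (hr : ∀ a, ¬ TransGen r a a) :
    IsPartialOrder α (ReflTransGen r) where
  refl _ := .refl
  trans _ _ _ := ReflTransGen.trans
  antisymm a b hab hba := by
    by_contra hne
    have hab' : TransGen r a b :=
      (reflTransGen_iff_eq_or_transGen.mp hab).resolve_left (Ne.symm hne)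
    exact hr b (hab'.trans_right hba)

theorem exists_linearOrder_strictly_extending (hr : ∀ a, ¬ TransGen r a a) :
    ∃ s : α → α → Prop, IsLinearOrder α s ∧ ∀ a b, r a b → s a b ∧ ¬ s b a := by
  have := isPartialOrder_reflTransGen hr
  obtain ⟨s, hs, hle⟩ := extend_partialOrder (ReflTransGen r)
  refine ⟨s, hs, fun a b hab => ⟨hle _ _ (.single hab), fun hba => ?_⟩⟩
  have hba' : a = b := antisymm (r := s) (hle _ _ (.single hab)) hba
  exact hr a (.single (hba' ▸ hab))

end Relation

open Relation

section RevealedPreference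

variable {K : Type*} {α : Type} (x : K → α) (S : K → Set α)

def RevealedWorse (a b : α) : Prop :=
  ∃ k, b = x k ∧ a ∈ S k ∧ a ≠ b

theorem not_exists_choice_cycle_iff :
    (¬ ∃ (L : ℕ) (k : Fin (L + 1) → K), ∀ l,
        x (k l) ≠ x (k (l + 1)) ∧ x (k l) ∈ S (k (l + 1))) ↔
      ∀ a, ¬ TransGen (RevealedWorse x S) a a := by
  rw [← not_exists, ← exists_fin_cycle_iff_exists_transGen, not_iff_not]
  constructor
  · rintro ⟨L, k, hk⟩
    exact ⟨L, x ∘ k, fun l => ⟨k (l + 1), rfl, (hk l).2, (hk l).1⟩⟩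
  · rintro ⟨L, f, hf⟩
    choose k hk using hf
    refine ⟨L, fun l => k (l - 1), fun l => ?_⟩
    simp only [add_sub_cancel_right]
    obtain ⟨hprev, -, -⟩ := hk (l - 1)
    obtain ⟨hnext, hin, hne⟩ := hk l
    rw [sub_add_cancel] at hprev
    rw [← hprev, ← hnext]
    exact ⟨hne, hin⟩

variable {x S}

theorem RevealedWorse.strictly_worse {p : α → α → Prop} (hp : Transitive p)
    (hmax : ∀ k, maxSet (S k) p = {x k}) {a b : α} (hab : RevealedWorse x S a b) :
    p b a ∧ ¬ p a b := by
  obtain ⟨k, rfl, ha, hne⟩ := hab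
  have hxk : x k ∈ maxSet (S k) p := (hmax k).symm ▸ rfl
  refine ⟨hxk.2 a ha, fun hpa => hne ?_⟩
  have ha_max : a ∈ maxSet (S k) p := ⟨ha, fun y hy => hp hpa (hxk.2 y hy)⟩
  rwa [hmax k] at ha_max

theorem exists_weakOrder_maxSet_eq_singleton_iff (hx : ∀ k, x k ∈ S k) :
    (∃ p : α → α → Prop, WeakOrder p ∧ ∀ k, maxSet (S k) p = {x k}) ↔
      ∀ a, ¬ TransGen (RevealedWorse x S) a a := by
  constructor
  · rintro ⟨p, ⟨-, hp⟩, hmax⟩ a ha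
    have : IsTrans α fun a b => p b a ∧ ¬ p a b :=
      ⟨fun _ _ _ hab hbc => ⟨hp hbc.1 hab.1, fun h => hab.2 (hp h hbc.1)⟩⟩
    have := TransGen.mono (fun _ _ => RevealedWorse.strictly_worse hp hmax) a a ha
    rw [transGen_eq_self] at this
    exact this.2 this.1
  · intro hacyc
    obtain ⟨s, hs, hext⟩ := exists_linearOrder_strictly_extending hacyc
    refine ⟨fun a b => s b a, ⟨fun a b => total_of s b a, fun _ _ _ hab hbc => _root_.trans hbc hab⟩,
      fun k => Set.eq_singleton_iff_unique_mem.mpr ⟨⟨hx k, fun y hy => ?_⟩, ?_⟩⟩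
    · by_cases hyx : y = x k
      · exact hyx ▸ refl_of s y
      · exact (hext y (x k) ⟨k, rfl, hy, hyx⟩).1
    · rintro y ⟨hy, hymax⟩
      by_contra hyx
      exact (hext y (x k) ⟨k, rfl, hy, hyx⟩).2 (hymax _ (hx k))

end RevealedPreference

section NaiveNash

variable {K : Type} {T : ℕ} (hT : 0 < T) {X : Fin T → Type}

theorem secUpTo_pred_eq_secExcept_last (B : Set (∀ t, X t)) (y : ∀ t, X t) :
    secUpTo B y (T - 1) = secExcept B y ⟨T - 1, by omega⟩ := by
  ext z
  simp only [secUpTo, secExcept, Set.mem_ofPred_eq, ne_eq, Fin.ext_iff]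
  refine and_congr_right fun _ => forall_congr' fun s => imp_congr_left ?_
  have := s.isLt
  omega

theorem naiveNashRatT_iff_lastPeriod (x : K → ∀ t, X t) (B : K → Set (∀ t, X t))
    (hmem : ∀ k, x k ∈ B k) :
    NaiveNashRatT hT x B ↔ ∃ p, WeakOrder p ∧
      ∀ k, maxSet (secExcept (B k) (x k) ⟨T - 1, by omega⟩) p = {x k} := by
  simp only [NaiveNashRatT, secUpTo_pred_eq_secExcept_last hT]
  constructor
  · rintro ⟨pref, hpref, hmax⟩
    exact ⟨_, hpref _, fun k => (hmax k).2⟩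
  · rintro ⟨p, hp, hmax⟩
    classical
    let last : Fin T := ⟨T - 1, by omega⟩
    refine ⟨Function.update (fun _ _ _ => True) last p, fun t => ?_, fun k => ⟨fun t hlt => ?_, ?_⟩⟩
    · by_cases ht : t = last
      · subst ht; simpa using hp
      · rw [Function.update_of_ne ht]
        exact ⟨fun _ _ => .inl trivial, fun _ _ _ _ _ => trivial⟩
    · have ht : t ≠ last := fun h => by simp [last, h] at hlt; omega
      rw [Function.update_of_ne ht]
      exact ⟨⟨hmem k, fun _ _ => rfl⟩, fun _ _ => trivial⟩
    · rw [Function.update_self]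
      exact hmax k

end NaiveNash

theorem naive_nash_rationalizable_iff_TSARP_general
    {K : Type} {T : ℕ} (hT : 0 < T) {X : Fin T → Type}
    (x : K → ∀ t, X t) (B : K → Set (∀ t, X t)) (hmem : ∀ k, x k ∈ B k) :
    NaiveNashRatT hT x B ↔ TSARP hT x B := by
  let S : K → Set (∀ t, X t) := fun k => secExcept (B k) (x k) ⟨T - 1, by omega⟩
  have hx : ∀ k, x k ∈ S k := fun k => ⟨hmem k, fun _ _ => rfl⟩
  rw [naiveNashRatT_iff_lastPeriod hT x B hmem, exists_weakOrder_maxSet_eq_singleton_iff hx]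
  exact (not_exists_choice_cycle_iff x S).symm

theorem naive_nash_rationalizable_iff_TSARP
    {K : Type} [Fintype K] {T : ℕ} (hT : 0 < T) {X : Fin T → Type}
    (x : K → ∀ t, X t) (B : K → Set (∀ t, X t)) (hmem : ∀ k, x k ∈ B k) :
    NaiveNashRatT hT x B ↔ TSARP hT x B :=
  naive_nash_rationalizable_iff_TSARP_general hT x B hmem
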